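/- arXiv:2406.11222 — 8 statements merged into one kernel-verified Lean document; each statement's English description precedes it below -/
import Mathlib

section
/- Let R be a ring and M an R-module. Then every cyclic submodule of M is a direct summand of M if and only if every finitely generated submodule of M is a direct summand of M. -/
/-!
Given a summand, `M = A ⊕ A'`, and `m ∈ M`, split `m = a + b` with `a ∈ A`, `b ∈ A'`.
Then `A + Rm = A + Rb`, and if `C` complements `Rb` in `M`, modularity gives
`A' = Rb ⊕ (A' ∩ C)`, so `A' ∩ C` complements `A + Rm`. Induction on the number of generators
finishes the proof.
-/

/-- A submodule is a direct summand if it has a complement. -/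
def Submodule.IsDirectSummand {R M : Type*} [Ring R] [AddCommGroup M] [Module R M]
    (N : Submodule R M) : Prop :=
  ∃ N' : Submodule R M, IsCompl N N'

theorem IsCompl.sup_inf_of_le_of_isCompl {α : Type*} [Lattice α] [BoundedOrder α]
    [IsModularLattice α] {a a' b c : α} (ha : IsCompl a a') (hb : b ≤ a') (hbc : IsCompl b c) :
    IsCompl (a ⊔ b) (a' ⊓ c) := by
  constructor
  · rw [disjoint_iff, ← inf_assoc, sup_comm, sup_inf_assoc_of_le a hb, ha.inf_eq_bot, sup_bot_eq,
      hbc.inf_eq_bot]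
  · rw [codisjoint_iff, sup_assoc, inf_comm, ← sup_inf_assoc_of_le c hb, hbc.sup_eq_top,
      top_inf_eq, ha.sup_eq_top]

namespace Submodule

variable {R M : Type*} [Ring R] [AddCommGroup M] [Module R M]

theorem sup_span_singleton_add_of_mem {A : Submodule R M} {a : M} (ha : a ∈ A) (b : M) :
    A ⊔ R ∙ (a + b) = A ⊔ R ∙ b := by
  apply le_antisymm <;> refine sup_le le_sup_left ((span_singleton_le_iff_mem _ _).2 ?_)
  · exact add_mem (mem_sup_left ha) (mem_sup_right (mem_span_singleton_self b))
  · simpa using sub_mem (mem_sup_right (mem_span_singleton_self (a + b))) (mem_sup_left ha)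

theorem IsDirectSummand.sup_span_singleton
    (h : ∀ m : M, (R ∙ m).IsDirectSummand) {A : Submodule R M} (hA : A.IsDirectSummand)
    (m : M) : (A ⊔ R ∙ m).IsDirectSummand := by
  obtain ⟨A', hAA'⟩ := hA
  obtain ⟨a, ha, b, hb, rfl⟩ := mem_sup.1 (hAA'.sup_eq_top ▸ mem_top : m ∈ A ⊔ A')
  obtain ⟨C, hC⟩ := h b
  rw [sup_span_singleton_add_of_mem ha]
  exact ⟨A' ⊓ C, hAA'.sup_inf_of_le_of_isCompl ((span_singleton_le_iff_mem _ _).2 hb) hC⟩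

end Submodule

/-- Every cyclic submodule of `M` is a direct summand of `M` if and only if every
finitely generated submodule of `M` is a direct summand of `M`. -/
theorem cyclic_summand_iff_fg_summand {R M : Type*} [Ring R] [AddCommGroup M] [Module R M] :
    (∀ m : M, (Submodule.span R {m}).IsDirectSummand) ↔
      (∀ N : Submodule R M, N.FG → N.IsDirectSummand) := by
  refine ⟨fun h ↦ ?_, fun h m ↦ h _ (Submodule.fg_span_singleton m)⟩
  exact Submodule.fg_sup_span_induction ⟨⊤, isCompl_bot_top⟩
    fun _ m _ hN ↦ hN.sup_span_singleton h m
end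

section
/- A ring R is virtually regular as a module over itself if and only if R is a pp-ring, i.e., every principal ideal of R is a projective R-module. -/
/-- A module is virtually regular if every cyclic submodule is isomorphic to a
direct summand. -/
def VirtuallyRegular (R M : Type*) [Ring R] [AddCommGroup M] [Module R M] : Prop :=
  ∀ m : M, ∃ N : Submodule R M, N.IsDirectSummand ∧
    Nonempty ((Submodule.span R {m}) ≃ₗ[R] N)

/-!
A principal ideal `Ra` is a quotient of `R`. If it is projective, the surjection `R → Ra`
splits, so `Ra` is isomorphic to the image of the splitting, a direct summand of `R`.
Conversely a module isomorphic to a direct summand of the free module `R` is projective.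
-/

section

variable {R M : Type*} [Ring R] [AddCommGroup M] [Module R M]

open LinearMap

theorem Submodule.IsDirectSummand.projective [Module.Projective R M] {N : Submodule R M}
    (hN : N.IsDirectSummand) : Module.Projective R N := by
  obtain ⟨N', hc⟩ := hN
  exact .of_split N.subtype (N.projectionOnto N' hc) (by ext; simp [projectionOnto_apply_left])

theorem VirtuallyRegular.projective_span_singleton [Module.Projective R M]
    (h : VirtuallyRegular R M) (m : M) : Module.Projective R (Submodule.span R {m}) := by
  obtain ⟨N, hN, ⟨e⟩⟩ := h m
  have := hN.projective
  exact .of_equiv' e.symm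

theorem exists_isDirectSummand_equiv_of_surjective {P : Type*} [AddCommGroup P] [Module R P]
    [Module.Projective R P] (f : M →ₗ[R] P) (hf : Function.Surjective f) :
    ∃ N : Submodule R M, N.IsDirectSummand ∧ Nonempty (P ≃ₗ[R] N) := by
  have hf_range : range f = ⊤ := range_eq_top_of_surjective f hf
  obtain ⟨s, hs⟩ := f.exists_rightInverse_of_surjective hf_range
  have hfs : ∀ p, f (s p) = p := LinearMap.congr_fun hs
  have hidem : IsIdempotentElem (s ∘ₗ f) := by
    ext x
    simp [Module.End.mul_apply, hfs]
  have hcompl : IsCompl (range s) (ker (s ∘ₗ f)) :=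
    range_comp_of_range_eq_top s hf_range ▸ hidem.isCompl
  exact ⟨range s, ⟨_, hcompl⟩, ⟨.ofInjective s (Function.LeftInverse.injective hfs)⟩⟩

end

/-- `R` is virtually regular as a module over itself iff `R` is a pp-ring, i.e. every
principal ideal of `R` is projective. -/
theorem virtuallyRegular_self_iff_pp_ring {R : Type*} [Ring R] :
    VirtuallyRegular R R ↔ ∀ a : R, Module.Projective R (Ideal.span {a}) := by
  refine ⟨fun h a => h.projective_span_singleton a, fun h a => ?_⟩
  have : Module.Projective R (LinearMap.range (LinearMap.toSpanSingleton R R a)) := by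
    rw [LinearMap.range_toSpanSingleton]
    exact h a
  rw [LinearMap.span_singleton_eq_range]
  exact exists_isDirectSummand_equiv_of_surjective _ (LinearMap.surjective_rangeRestrict _)
end

section
/- Let R be a ring and M an R-module such that every cyclic submodule of M is a direct summand of M (M is strongly regular). Then M is completely virtually regular, i.e., every submodule of M is virtually regular. -/
/-- A module is completely virtually regular if every submodule is virtually regular. -/
def CompletelyVirtuallyRegular (R M : Type*) [Ring R] [AddCommGroup M] [Module R M] : Prop :=
  ∀ A : Submodule R M, VirtuallyRegular R A

/-! A strongly regular module passes its defining property to every submodule `A`: a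
complement `C` of a cyclic `Rm ≤ A` in `M` cuts out the complement `A ⊓ C` of `Rm` in `A`
(modular law). So every submodule is strongly regular, in particular virtually regular. -/

def StronglyRegular (R M : Type*) [Ring R] [AddCommGroup M] [Module R M] : Prop :=
  ∀ m : M, (Submodule.span R {m}).IsDirectSummand

section

variable {R M : Type*} [Ring R] [AddCommGroup M] [Module R M]

theorem Submodule.IsDirectSummand.comap_subtype {N A : Submodule R M}
    (hN : N.IsDirectSummand) (hNA : N ≤ A) : (N.comap A.subtype).IsDirectSummand :=
  let ⟨C, hC⟩ := hN
  ⟨C.comap A.subtype, isCompl_comap_subtype_of_isCompl_of_le hC hNA⟩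

theorem Submodule.comap_subtype_span_singleton (A : Submodule R M) (m : A) :
    (Submodule.span R {(m : M)}).comap A.subtype = Submodule.span R {m} := by
  rw [← Submodule.map_subtype_span_singleton,
    Submodule.comap_map_eq_of_injective A.injective_subtype]

theorem StronglyRegular.submodule (h : StronglyRegular R M) (A : Submodule R M) :
    StronglyRegular R A := fun m => by
  simpa only [Submodule.comap_subtype_span_singleton] using
    (h m).comap_subtype ((Submodule.span_singleton_le_iff_mem _ _).mpr m.2)

theorem StronglyRegular.virtuallyRegular (h : StronglyRegular R M) : VirtuallyRegular R M :=
  fun m => ⟨_, h m, ⟨LinearEquiv.refl R _⟩⟩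

end

/-- If every cyclic submodule of `M` is a direct summand of `M` (i.e. `M` is strongly
regular), then `M` is completely virtually regular. -/
theorem completelyVirtuallyRegular_of_stronglyRegular {R M : Type*} [Ring R]
    [AddCommGroup M] [Module R M]
    (h : ∀ m : M, (Submodule.span R {m}).IsDirectSummand) :
    CompletelyVirtuallyRegular R M :=
  fun A => (StronglyRegular.submodule h A).virtuallyRegular
end

section
/- Let R be a commutative ring and A a nonzero indecomposable R-module. Then A is virtually regular if and only if A is isomorphic to R/P for some prime ideal P of R. -/
/-!
For an indecomposable module, the complement of a summand isomorphic to `R ∙ a` with `a ≠ 0` must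
vanish, so virtual regularity says exactly that every nonzero cyclic submodule `R ∙ a` is
isomorphic to `A`. Comparing annihilators, the torsion ideal of every `a ≠ 0` is then `ann A`,
which makes `ann A` prime (if `r • m ≠ 0` and `r * s ∈ ann A`, then `s` kills `r • m`) and gives
`A ≅ R ∙ a ≅ R ⧸ ann A`. Conversely, every nonzero element of `R ⧸ P` has torsion ideal `P`.
-/

open Submodule Ideal

section Ring

variable {R M : Type*} [Ring R] [AddCommGroup M] [Module R M]

theorem virtuallyRegular_of_forall_span_singleton_equiv
    (h : ∀ m : M, m ≠ 0 → Nonempty (span R {m} ≃ₗ[R] M)) : VirtuallyRegular R M := by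
  intro m
  by_cases hm : m = 0
  · subst hm
    exact ⟨⊥, ⟨⊤, isCompl_bot_top⟩, ⟨LinearEquiv.ofEq _ _ (span_zero_singleton R)⟩⟩
  · obtain ⟨e⟩ := h m hm
    exact ⟨⊤, ⟨⊥, isCompl_top_bot⟩, ⟨e.trans topEquiv.symm⟩⟩

theorem VirtuallyRegular.nonempty_span_singleton_equiv (hM : VirtuallyRegular R M)
    (hind : ∀ B C : Submodule R M, IsCompl B C → B = ⊥ ∨ C = ⊥) {m : M} (hm : m ≠ 0) :
    Nonempty (span R {m} ≃ₗ[R] M) := by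
  obtain ⟨N, ⟨N', hNN'⟩, ⟨e⟩⟩ := hM m
  rcases hind N N' hNN' with rfl | rfl
  · have : Subsingleton (span R {m}) := e.toEquiv.subsingleton
    exact absurd (span_singleton_eq_bot.mp (Submodule.subsingleton_iff_eq_bot.mp this)) hm
  · exact ⟨e.trans ((LinearEquiv.ofEq _ _ (eq_top_of_isCompl_bot hNN')).trans topEquiv)⟩

theorem virtuallyRegular_iff_forall_span_singleton_equiv
    (hind : ∀ B C : Submodule R M, IsCompl B C → B = ⊥ ∨ C = ⊥) :
    VirtuallyRegular R M ↔ ∀ m : M, m ≠ 0 → Nonempty (span R {m} ≃ₗ[R] M) :=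
  ⟨fun hM _ hm ↦ hM.nonempty_span_singleton_equiv hind hm,
    virtuallyRegular_of_forall_span_singleton_equiv⟩

theorem LinearEquiv.torsionOf_apply {N : Type*} [AddCommGroup N] [Module R N]
    (e : M ≃ₗ[R] N) (m : M) : torsionOf R N (e m) = torsionOf R M m := by
  ext r
  simp only [mem_torsionOf_iff, ← map_smul, e.map_eq_zero_iff]

end Ring

section CommRing

variable {R M : Type*} [CommRing R] [AddCommGroup M] [Module R M]

theorem Ideal.torsionOf_quotient_of_ne_zero {P : Ideal R} [P.IsPrime] {x : R ⧸ P}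
    (hx : x ≠ 0) : torsionOf R (R ⧸ P) x = P := by
  obtain ⟨r, rfl⟩ := Quotient.mk_surjective x
  rw [ne_eq, Quotient.eq_zero_iff_mem] at hx
  ext s
  rw [mem_torsionOf_iff, Algebra.smul_def, Quotient.algebraMap_eq, ← map_mul,
    Quotient.eq_zero_iff_mem]
  exact ⟨fun h ↦ (‹P.IsPrime›.mem_or_mem h).resolve_right hx, fun h ↦ P.mul_mem_right r h⟩

theorem torsionOf_eq_annihilator_of_span_singleton_equiv {m : M}
    (e : span R {m} ≃ₗ[R] M) : torsionOf R M m = Module.annihilator R M := by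
  rw [← annihilator_span_singleton_eq_torsionOf, Submodule.annihilator, e.annihilator_eq]

theorem isPrime_annihilator_of_forall_span_singleton_equiv [Nontrivial M]
    (h : ∀ m : M, m ≠ 0 → Nonempty (span R {m} ≃ₗ[R] M)) :
    (Module.annihilator R M).IsPrime := by
  have torsionOf_eq {m : M} (hm : m ≠ 0) : torsionOf R M m = Module.annihilator R M :=
    torsionOf_eq_annihilator_of_span_singleton_equiv (h m hm).some
  refine ⟨?_, fun {r s} hrs ↦ or_iff_not_imp_left.mpr fun hr ↦ ?_⟩
  · obtain ⟨a, ha⟩ := exists_ne (0 : M)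
    rw [← torsionOf_eq ha, ne_eq, torsionOf_eq_top_iff]
    exact ha
  · obtain ⟨m, hm⟩ : ∃ m : M, r • m ≠ 0 := by simpa [Module.mem_annihilator] using hr
    rw [← torsionOf_eq hm, mem_torsionOf_iff, smul_smul, mul_comm]
    exact Module.mem_annihilator.mp hrs m

theorem nonempty_equiv_quotient_annihilator_of_span_singleton_equiv {m : M}
    (e : span R {m} ≃ₗ[R] M) : Nonempty (M ≃ₗ[R] R ⧸ Module.annihilator R M) :=
  ⟨e.symm ≪≫ₗ (quotTorsionOfEquivSpanSingleton R M m).symm ≪≫ₗ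
    Submodule.quotEquivOfEq _ _ (torsionOf_eq_annihilator_of_span_singleton_equiv e)⟩

theorem nonempty_span_singleton_equiv_of_equiv_quotient {P : Ideal R} [P.IsPrime]
    (e : M ≃ₗ[R] R ⧸ P) {m : M} (hm : m ≠ 0) : Nonempty (span R {m} ≃ₗ[R] M) := by
  have htors : torsionOf R M m = P := by
    rw [← e.torsionOf_apply, torsionOf_quotient_of_ne_zero (e.map_ne_zero_iff.mpr hm)]
  exact ⟨(quotTorsionOfEquivSpanSingleton R M m).symm ≪≫ₗ
    Submodule.quotEquivOfEq _ _ htors ≪≫ₗ e.symm⟩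

end CommRing

/-- A nonzero indecomposable module `A` over a commutative ring `R` is virtually
regular iff `A ≅ R / P` for some prime ideal `P` of `R`. -/
theorem indecomposable_virtuallyRegular_iff {R A : Type*} [CommRing R]
    [AddCommGroup A] [Module R A] [Nontrivial A]
    (hind : ∀ B C : Submodule R A, IsCompl B C → B = ⊥ ∨ C = ⊥) :
    VirtuallyRegular R A ↔
      ∃ P : Ideal R, P.IsPrime ∧ Nonempty (A ≃ₗ[R] R ⧸ P) := by
  rw [virtuallyRegular_iff_forall_span_singleton_equiv hind]
  constructor
  · intro h
    obtain ⟨a, ha⟩ := exists_ne (0 : A)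
    exact ⟨_, isPrime_annihilator_of_forall_span_singleton_equiv h,
      nonempty_equiv_quotient_annihilator_of_span_singleton_equiv (h a ha).some⟩
  · rintro ⟨P, hP, ⟨e⟩⟩ m hm
    exact nonempty_span_singleton_equiv_of_equiv_quotient e hm
end

section
/- An abelian group M (i.e., a ℤ-module) is virtually regular if and only if its torsion subgroup T(M) and the quotient group M/T(M) are both virtually regular. -/
/-!
Over `ℤ` a cyclic submodule is determined up to isomorphism by the order of its generator, so
`M` is virtually regular iff every order occurring in `M` is the order of some `u` with `ℤ ∙ u`
a direct summand.

For `u` of infinite order, `ℤ ∙ u` is a summand iff some `f : M →ₗ[ℤ] ℤ` has `f u = 1`; such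
an `f` kills the torsion, so it is the same as a functional on `M ⧸ T(M)`.

For `t` of finite order `n`, a summand `ℤ ∙ t` of `T(M)` is pure in `T(M)`, hence in `M`
because `T(M)` is pure. Purity makes `t` of order `n` in `M ⧸ nM`; a character of `M ⧸ nM`
sending `t` to `1/n` then has values in the cyclic group generated by `1/n`, and its kernel
is a complement of `ℤ ∙ t` in `M`. Conversely a summand contained in `T(M)` is a summand of
`T(M)` by the modular law.
-/

open Submodule

section Ring

variable {R M : Type*} [Ring R] [AddCommGroup M] [Module R M]

theorem Submodule.addOrderOf_coe (p : Submodule R M) (x : p) :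
    addOrderOf (x : M) = addOrderOf x :=
  AddSubgroup.addOrderOf_coe (H := p.toAddSubgroup) x

theorem isCompl_span_singleton_ker {N : Type*} [AddCommGroup N] [Module R N] (F : M →ₗ[R] N)
    {t : M} (hinj : ∀ a : R, a • F t = 0 → a • t = 0) (hsurj : ∀ x, ∃ a : R, a • F t = F x) :
    IsCompl (span R {t}) (LinearMap.ker F) := by
  refine IsCompl.of_eq (eq_bot_iff.mpr ?_) (eq_top_iff.mpr fun x _ => ?_)
  · rintro _ ⟨hx, hker⟩
    obtain ⟨a, rfl⟩ := mem_span_singleton.mp hx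
    rw [SetLike.mem_coe, LinearMap.mem_ker, map_smul] at hker
    exact (mem_bot R).mpr (hinj a hker)
  · obtain ⟨a, ha⟩ := hsurj x
    refine mem_sup.mpr ⟨a • t, smul_mem _ a (mem_span_singleton_self t), x - a • t, ?_,
      add_sub_cancel _ _⟩
    rw [LinearMap.mem_ker, map_sub, map_smul, ha, sub_self]

theorem exists_linearMap_apply_eq_one_iff (u : M) :
    (∃ f : M →ₗ[R] R, f u = 1) ↔
      (∀ r : R, r • u = 0 → r = 0) ∧ (span R {u}).IsDirectSummand := by
  constructor
  · rintro ⟨f, hf⟩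
    have hfu (r : R) : r • f u = r := by rw [hf, smul_eq_mul, mul_one]
    refine ⟨fun r hr => by rw [← hfu r, ← map_smul, hr, map_zero], LinearMap.ker f,
      isCompl_span_singleton_ker f (fun a ha => ?_) fun x => ⟨f x, hfu (f x)⟩⟩
    rw [← hfu a, ha, zero_smul]
  · rintro ⟨hu, C, hC⟩
    have hinj : Function.Injective (LinearMap.toSpanSingleton R M u) :=
      (injective_iff_map_eq_zero _).mpr hu
    let e : R ≃ₗ[R] span R {u} := (LinearEquiv.ofInjective _ hinj).trans
      (LinearEquiv.ofEq _ _ (LinearMap.range_toSpanSingleton u))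
    have he : e 1 = ⟨u, mem_span_singleton_self u⟩ := Subtype.ext (one_smul R u)
    refine ⟨e.symm.toLinearMap ∘ₗ projectionOnto _ _ hC, ?_⟩
    rw [LinearMap.comp_apply, projectionOnto_apply_of_mem_left hC (mem_span_singleton_self u),
      ← he, LinearEquiv.coe_coe, e.symm_apply_apply]

end Ring

section CommRing

variable {R M : Type*} [CommRing R] [AddCommGroup M] [Module R M]

theorem smul_eq_zero_of_eq_smul_of_isCompl {t : M} {C : Submodule R M}
    (h : IsCompl (span R {t}) C) {r a : R} (hr : r • t = 0) {x : M} (hx : a • t = r • x) :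
    a • t = 0 := by
  obtain ⟨_, hv, w, hw, rfl⟩ := mem_sup.mp (h.sup_eq_top ▸ mem_top : x ∈ span R {t} ⊔ C)
  obtain ⟨b, rfl⟩ := mem_span_singleton.mp hv
  have hbt : r • b • t = 0 := by rw [smul_comm, hr, smul_zero]
  have hmem : a • t - r • b • t ∈ span R {t} ⊓ C := by
    refine ⟨sub_mem (smul_mem _ a (mem_span_singleton_self t))
      (smul_mem _ r (smul_mem _ b (mem_span_singleton_self t))), ?_⟩
    rw [hx, smul_add, add_sub_cancel_left]
    exact C.smul_mem r hw
  rwa [h.inf_eq_bot, mem_bot, hbt, sub_zero] at hmem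

theorem exists_linearMap_quotTorsion_apply_mk_eq_one_iff [IsDomain R] (u : M) :
    (∃ f : M ⧸ torsion R M →ₗ[R] R, f (Submodule.Quotient.mk u) = 1) ↔
      ∃ f : M →ₗ[R] R, f u = 1 := by
  refine ⟨fun ⟨f, hf⟩ => ⟨f ∘ₗ (torsion R M).mkQ, hf⟩, fun ⟨f, hf⟩ => ?_⟩
  have hker : torsion R M ≤ LinearMap.ker f := fun x hx => by
    obtain ⟨a, ha⟩ := (mem_torsion_iff x).mp hx
    have : (a : R) * f x = 0 := by
      rw [← smul_eq_mul, ← map_smul, ← Submonoid.smul_def, ha, map_zero]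
    exact (mul_eq_zero.mp this).resolve_left (nonZeroDivisors.coe_ne_zero a)
  exact ⟨(torsion R M).liftQ f hker, hf⟩

end CommRing

theorem AddCircle.exists_zsmul_eq_of_nsmul_eq_zero {𝕜 : Type*} [Field 𝕜] (p : 𝕜) {n : ℕ}
    (hn : (n : 𝕜) ≠ 0) {q : AddCircle p} (h : n • q = 0) :
    ∃ z : ℤ, z • ((p / n : 𝕜) : AddCircle p) = q := by
  induction q using QuotientAddGroup.induction_on with | H x => ?_
  obtain ⟨z, hz⟩ := (coe_eq_zero_iff p).mp (by rwa [← coe_nsmul] at h)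
  refine ⟨z, ?_⟩
  rw [← coe_zsmul, zsmul_eq_mul, ← mul_div_assoc, ← zsmul_eq_mul, hz, nsmul_eq_mul,
    mul_div_cancel_left₀ x hn]

theorem CharacterModule.ofSpanSingleton_apply_self {A : Type*} [AddCommGroup A] {a : A}
    (ha : addOrderOf a ≠ 0) :
    ofSpanSingleton a ⟨a, mem_span_singleton_self a⟩ =
      ((1 / addOrderOf a : ℚ) : AddCircle (1 : ℚ)) := by
  erw [ofSpanSingleton, LinearMap.toAddMonoidHom_coe, LinearMap.comp_apply,
    intSpanEquivQuotAddOrderOf_apply_self, liftQSpanSingleton_apply,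
    AddMonoidHom.coe_toIntLinearMap, if_neg ha, LinearMap.toSpanSingleton_apply_one, one_div]

section AddCommGroup

variable {M : Type*} [AddCommGroup M]

theorem Submodule.mem_torsion_int_iff (x : M) : x ∈ torsion ℤ M ↔ addOrderOf x ≠ 0 := by
  rw [← mem_toAddSubgroup, torsion_int, AddCommGroup.mem_torsion, addOrderOf_ne_zero_iff]

noncomputable def spanSingletonEquivOfAddOrderOfEq {M' : Type*} [AddCommGroup M'] {x : M}
    {y : M'} (h : addOrderOf x = addOrderOf y) : span ℤ {x} ≃ₗ[ℤ] span ℤ {y} :=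
  CharacterModule.intSpanEquivQuotAddOrderOf x ≪≫ₗ quotEquivOfEq _ _ (by rw [h]) ≪≫ₗ
    (CharacterModule.intSpanEquivQuotAddOrderOf y).symm

theorem exists_eq_span_singleton_of_linearEquiv {M' : Type*} [AddCommGroup M'] {m : M'}
    {N : Submodule ℤ M} (e : span ℤ {m} ≃ₗ[ℤ] N) :
    ∃ u : M, N = span ℤ {u} ∧ addOrderOf u = addOrderOf m := by
  let m' : span ℤ {m} := ⟨m, mem_span_singleton_self m⟩
  refine ⟨e m', ?_, ?_⟩
  · have hm' : span ℤ {m'} = ⊤ := eq_top_iff.mpr fun ⟨x, hx⟩ _ => by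
      obtain ⟨a, rfl⟩ := mem_span_singleton.mp hx
      exact mem_span_singleton.mpr ⟨a, rfl⟩
    calc N = (⊤ : Submodule ℤ N).map N.subtype := N.map_subtype_top.symm
      _ = ((span ℤ {m'}).map e.toLinearMap).map N.subtype := by
        rw [hm', Submodule.map_top (f := e.toLinearMap), LinearEquiv.range]
      _ = span ℤ {(e m' : M)} := by
        rw [map_span, map_span, Set.image_singleton, Set.image_singleton]; rfl
  · rw [N.addOrderOf_coe]
    exact (AddEquiv.addOrderOf_eq e.toAddEquiv m').trans ((span ℤ {m}).addOrderOf_coe m').symm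

theorem virtuallyRegular_int_iff : VirtuallyRegular ℤ M ↔
    ∀ m : M, ∃ u : M, addOrderOf u = addOrderOf m ∧ (span ℤ {u}).IsDirectSummand := by
  refine forall_congr' fun m => ⟨fun ⟨N, hN, ⟨e⟩⟩ => ?_, fun ⟨u, hu, hsum⟩ => ?_⟩
  · obtain ⟨u, rfl, hu⟩ := exists_eq_span_singleton_of_linearEquiv e
    exact ⟨u, hu, hN⟩
  · exact ⟨span ℤ {u}, hsum, ⟨spanSingletonEquivOfAddOrderOfEq hu.symm⟩⟩

theorem isDirectSummand_span_singleton_of_pure {t : M} (ht : addOrderOf t ≠ 0)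
    (hpure : ∀ (a : ℤ) (x : M), a • t = (addOrderOf t : ℤ) • x → a • t = 0) :
    (span ℤ {t}).IsDirectSummand := by
  set n := addOrderOf t
  let P : Submodule ℤ M := LinearMap.range (DistribSMul.toLinearMap ℤ M (n : ℤ))
  have hP (y : M) : y ∈ P ↔ ∃ x : M, (n : ℤ) • x = y := LinearMap.mem_range
  have hord : addOrderOf (P.mkQ t) = n := addOrderOf_eq_addOrderOf_iff.mpr fun k => by
    rw [← map_nsmul, mkQ_apply, Quotient.mk_eq_zero, hP, ← natCast_zsmul]
    exact ⟨fun ⟨x, hx⟩ => hpure k x hx.symm, fun h => ⟨0, by rw [smul_zero, h]⟩⟩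
  obtain ⟨c, hc⟩ := CharacterModule.dual_surjective_of_injective _ (injective_subtype _)
    (CharacterModule.ofSpanSingleton (P.mkQ t))
  let F : M →ₗ[ℤ] AddCircle (1 : ℚ) := c.toIntLinearMap ∘ₗ P.mkQ
  have hFt : F t = ((1 / n : ℚ) : AddCircle (1 : ℚ)) := by
    rw [← hord, ← CharacterModule.ofSpanSingleton_apply_self (hord ▸ ht), ← hc]
    rfl
  have hFt_ord : addOrderOf (F t) = n :=
    hFt ▸ AddCircle.addOrderOf_period_div (Nat.pos_of_ne_zero ht)
  have hFn (x : M) : n • F x = 0 := by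
    rw [← map_nsmul, LinearMap.comp_apply, mkQ_apply, (Quotient.mk_eq_zero P).mpr, map_zero]
    exact (hP _).mpr ⟨x, natCast_zsmul x n⟩
  refine ⟨LinearMap.ker F, isCompl_span_singleton_ker F (fun a ha => ?_) fun x => ?_⟩
  · rw [← addOrderOf_dvd_iff_zsmul_eq_zero, hFt_ord] at ha
    exact addOrderOf_dvd_iff_zsmul_eq_zero.mp ha
  · rw [hFt]
    exact AddCircle.exists_zsmul_eq_of_nsmul_eq_zero 1 (Nat.cast_ne_zero.mpr ht) (hFn x)

theorem isDirectSummand_span_singleton_torsion_iff (t : torsion ℤ M) :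
    (span ℤ {t}).IsDirectSummand ↔ (span ℤ {(t : M)}).IsDirectSummand := by
  have hspan : span ℤ {(t : M)} = (span ℤ {t}).map (torsion ℤ M).subtype := by
    rw [map_span, Set.image_singleton, subtype_apply]
  constructor
  · rintro ⟨C, hC⟩
    have ht : addOrderOf (t : M) ≠ 0 := (mem_torsion_int_iff _).mp t.2
    refine isDirectSummand_span_singleton_of_pure ht fun a x hx => ?_
    have hnt : (addOrderOf (t : M) : ℤ) • t = 0 := by
      rw [(torsion ℤ M).addOrderOf_coe]
      exact addOrderOf_dvd_iff_zsmul_eq_zero.mp dvd_rfl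
    have hxT : x ∈ torsion ℤ M := by
      rw [mem_torsion_int_iff, addOrderOf_ne_zero_iff, isOfFinAddOrder_iff_zsmul_eq_zero]
      have hn : (addOrderOf (t : M) : ℤ) ≠ 0 := by exact_mod_cast ht
      refine ⟨_, mul_ne_zero hn hn, ?_⟩
      rw [mul_smul, ← hx, smul_comm, ← coe_smul, hnt, ZeroMemClass.coe_zero, smul_zero]
    exact congrArg Subtype.val
      (smul_eq_zero_of_eq_smul_of_isCompl hC hnt (x := ⟨x, hxT⟩) (Subtype.ext hx))
  · rintro ⟨C, hC⟩
    refine ⟨C.comap (torsion ℤ M).subtype, ?_⟩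
    have := isCompl_comap_subtype_of_isCompl_of_le hC (hspan ▸ map_subtype_le _ _)
    rwa [hspan, comap_map_eq_of_injective (injective_subtype _)] at this

theorem addOrderOf_eq_zero_and_isDirectSummand_iff (u : M) :
    addOrderOf u = 0 ∧ (span ℤ {u}).IsDirectSummand ↔ ∃ f : M →ₗ[ℤ] ℤ, f u = 1 := by
  rw [exists_linearMap_apply_eq_one_iff, addOrderOf_eq_zero_iff,
    isOfFinAddOrder_iff_zsmul_eq_zero]
  simp only [not_exists, not_and, not_imp_not]

theorem addOrderOf_mk_eq_zero_and_isDirectSummand_iff (u : M) :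
    addOrderOf (Submodule.Quotient.mk u : M ⧸ torsion ℤ M) = 0 ∧
        (span ℤ {(Submodule.Quotient.mk u : M ⧸ torsion ℤ M)}).IsDirectSummand ↔
      addOrderOf u = 0 ∧ (span ℤ {u}).IsDirectSummand := by
  rw [addOrderOf_eq_zero_and_isDirectSummand_iff, addOrderOf_eq_zero_and_isDirectSummand_iff,
    exists_linearMap_quotTorsion_apply_mk_eq_one_iff]

theorem addOrderOf_mk_torsion_eq_zero_iff (m : M) :
    addOrderOf (Submodule.Quotient.mk m : M ⧸ torsion ℤ M) = 0 ↔ addOrderOf m = 0 := by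
  have : IsAddTorsionFree (M ⧸ torsion ℤ M) :=
    Module.isTorsionFree_int_iff_isAddTorsionFree.mp inferInstance
  rw [addOrderOf_eq_zero_iff, isOfFinAddOrder_iff_eq_zero, Quotient.mk_eq_zero,
    mem_torsion_int_iff, not_not]

theorem virtuallyRegular_int_torsion_iff : VirtuallyRegular ℤ (torsion ℤ M) ↔
    ∀ m : M, addOrderOf m ≠ 0 →
      ∃ u : M, addOrderOf u = addOrderOf m ∧ (span ℤ {u}).IsDirectSummand := by
  rw [virtuallyRegular_int_iff]
  constructor
  · intro h m hm
    obtain ⟨u, hu, hsum⟩ := h ⟨m, (mem_torsion_int_iff m).mpr hm⟩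
    exact ⟨u, ((addOrderOf_coe _ u).trans hu).trans (addOrderOf_coe _ _).symm,
      (isDirectSummand_span_singleton_torsion_iff u).mp hsum⟩
  · intro h t
    obtain ⟨u, hu, hsum⟩ := h t ((mem_torsion_int_iff _).mp t.2)
    have huT : u ∈ torsion ℤ M :=
      (mem_torsion_int_iff u).mpr (hu ▸ (mem_torsion_int_iff _).mp t.2)
    refine ⟨⟨u, huT⟩, ?_, (isDirectSummand_span_singleton_torsion_iff ⟨u, huT⟩).mpr hsum⟩
    rw [← addOrderOf_coe, ← addOrderOf_coe, hu]

theorem virtuallyRegular_int_quotTorsion_iff : VirtuallyRegular ℤ (M ⧸ torsion ℤ M) ↔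
    ∀ m : M, addOrderOf m = 0 → ∃ u : M, addOrderOf u = 0 ∧ (span ℤ {u}).IsDirectSummand := by
  rw [virtuallyRegular_int_iff]
  constructor
  · intro h m hm
    obtain ⟨ub, hub, hsum⟩ := h (Submodule.Quotient.mk m)
    obtain ⟨u, rfl⟩ := Submodule.Quotient.mk_surjective _ ub
    exact ⟨u, (addOrderOf_mk_eq_zero_and_isDirectSummand_iff u).mp
      ⟨hub.trans ((addOrderOf_mk_torsion_eq_zero_iff m).mpr hm), hsum⟩⟩
  · intro h x
    obtain ⟨m, rfl⟩ := Submodule.Quotient.mk_surjective _ x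
    by_cases hm : addOrderOf m = 0
    · obtain ⟨u, hu⟩ := h m hm
      obtain ⟨hu0, hsum⟩ := (addOrderOf_mk_eq_zero_and_isDirectSummand_iff u).mpr hu
      exact ⟨_, hu0.trans ((addOrderOf_mk_torsion_eq_zero_iff m).mpr hm).symm, hsum⟩
    · rw [(Quotient.mk_eq_zero _).mpr ((mem_torsion_int_iff m).mpr hm)]
      exact ⟨0, rfl, ⊤, by simpa using isCompl_bot_top⟩

end AddCommGroup

/-- An abelian group `M` is virtually regular iff its torsion subgroup `T(M)` and the
quotient `M / T(M)` are both virtually regular. -/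
theorem abelianGroup_virtuallyRegular_iff (M : Type*) [AddCommGroup M] :
    VirtuallyRegular ℤ M ↔
      (VirtuallyRegular ℤ (Submodule.torsion ℤ M) ∧
        VirtuallyRegular ℤ (M ⧸ Submodule.torsion ℤ M)) := by
  rw [virtuallyRegular_int_iff, virtuallyRegular_int_torsion_iff,
    virtuallyRegular_int_quotTorsion_iff]
  refine ⟨fun h => ⟨fun m _ => h m, fun m hm => hm ▸ h m⟩, fun ⟨hT, hQ⟩ m => ?_⟩
  by_cases hm : addOrderOf m = 0
  · exact hm ▸ hQ m hm
  · exact hT m hm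
end

section
/- Let R be a valuation domain whose unique maximal ideal P is not principal. Then every finitely presented virtually regular R-module is free. -/
/-!
Take a minimal presentation `Rⁿ → M`: its module of relations is finitely generated with all
coordinates in `P`, so over the Bezout ring `R` they are all divisible by one `e ∈ P`. If `q ≠ 0`
kills a nonzero direct summand `N` and `e ∤ q`, then `q ∣ e` with a cofactor in `P`, which forces
`N ⊆ P • M`, impossible by Nakayama. By virtual regularity every `q ≠ 0` killing a nonzero element
of `M` is therefore divisible by `e`. The annihilator of a nonzero torsion element `t` is principal,
say `(a)`, because `M` is finitely presented; every `q ∈ P` either is a multiple of `a` or kills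
`(a / q) • t ≠ 0`, so `P = (e)`. Hence `M` is torsion-free, thus flat, thus free.
-/

open IsLocalRing Submodule
open scoped TensorProduct

section

variable {R M : Type*} [CommRing R] [AddCommGroup M] [Module R M]

theorem IsLocalRing.exists_linearCombination_surjective_ker_mem_maximalIdeal
    [IsLocalRing R] [Module.Finite R M] :
    ∃ (n : ℕ) (v : Fin n → M), Function.Surjective (Fintype.linearCombination R v) ∧
      ∀ a ∈ LinearMap.ker (Fintype.linearCombination R v), ∀ i, a i ∈ maximalIdeal R := by
  let b := Module.finBasis (ResidueField R) (ResidueField R ⊗[R] M)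
  obtain ⟨v, hv⟩ := (TensorProduct.mk_surjective R M (ResidueField R)
    Ideal.Quotient.mk_surjective).comp_left b
  refine ⟨_, v, ?_, fun a ha i => ?_⟩
  · rw [← LinearMap.range_eq_top, Fintype.range_linearCombination]
    exact span_eq_top_of_tmul_eq_basis v b (congr_fun hv)
  · have hb : ∑ j, residue R (a j) • b j = 0 := by
      have := congr_arg (TensorProduct.mk R (ResidueField R) M 1) ha
      simpa [Fintype.linearCombination_apply, ← hv, map_sum, ← ResidueField.algebraMap_eq,
        algebraMap_smul] using this
    rw [← residue_eq_zero_iff]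
    exact Fintype.linearIndependent_iff.mp b.linearIndependent _ hb i

theorem IsBezout.exists_dvd_of_fg_of_forall_mem [IsBezout R] {ι : Type*} [Finite ι]
    {K : Submodule R (ι → R)} (hK : K.FG) {J : Ideal R} (hKJ : ∀ a ∈ K, ∀ i, a i ∈ J) :
    ∃ e ∈ J, ∀ a ∈ K, ∀ i, e ∣ a i := by
  let I : Ideal R := ⨆ i, K.map (LinearMap.proj i)
  have hI : I.IsPrincipal := IsBezout.isPrincipal_of_FG I (fg_iSup _ fun i => hK.map _)
  have hmem : ∀ a ∈ K, ∀ i, a i ∈ I := fun a ha i => mem_iSup_of_mem i ⟨a, ha, rfl⟩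
  refine ⟨IsPrincipal.generator I, ?_,
    fun a ha i => (IsPrincipal.mem_iff_generator_dvd I).mp (hmem a ha i)⟩
  refine (iSup_le fun i => ?_ : I ≤ J) (IsPrincipal.generator_mem I)
  rintro _ ⟨a, ha, rfl⟩
  exact hKJ a ha i

theorem ValuationRing.exists_surjective_forall_ker_dvd [IsDomain R] [ValuationRing R]
    [Module.FinitePresentation R M] :
    ∃ (n : ℕ) (φ : (Fin n → R) →ₗ[R] M), Function.Surjective φ ∧
      ∃ e ∈ maximalIdeal R, ∀ a ∈ LinearMap.ker φ, ∀ i, e ∣ a i := by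
  obtain ⟨n, v, hv, hker⟩ :=
    exists_linearCombination_surjective_ker_mem_maximalIdeal (R := R) (M := M)
  exact ⟨n, _, hv, IsBezout.exists_dvd_of_fg_of_forall_mem
    (Module.FinitePresentation.fg_ker _ hv) hker⟩

theorem Submodule.finitePresentation_of_isCompl [Module.FinitePresentation R M]
    {N N' : Submodule R M} (h : IsCompl N N') : Module.FinitePresentation R N := by
  refine Module.finitePresentation_of_surjective _ (projectionOnto_surjective h) ?_
  rw [ker_projectionOnto]
  have : Module.Finite R N' := Module.Finite.of_surjective _ (projectionOnto_surjective h.symm)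
  exact Module.Finite.iff_fg.mp this

theorem Submodule.eq_bot_of_isCompl_of_le_smul_top {N N' : Submodule R M} (h : IsCompl N N')
    (hN : N.FG) {I : Ideal R} (hI : I ≤ Ideal.jacobson ⊥) (hNI : N ≤ I • ⊤) : N = ⊥ := by
  refine eq_bot_of_le_smul_of_le_jacobson_bot I N hN ?_ hI
  calc N ≤ N.map (N.projection N' h) := fun x hx => ⟨x, hx, projection_apply_of_mem_left h hx⟩
    _ ≤ map (N.projection N' h) (I • ⊤) := map_mono hNI
    _ = I • N := by rw [map_smul'', map_top, range_projection]

theorem exists_eq_smul_of_smul_eq_zero [IsDomain R] {ι : Type*} {φ : (ι → R) →ₗ[R] M}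
    (hφ : Function.Surjective φ) {q s : R} (hq : q ≠ 0)
    (hker : ∀ a ∈ LinearMap.ker φ, ∀ i, q * s ∣ a i) {x : M} (hx : q • x = 0) :
    ∃ y, x = s • y := by
  obtain ⟨w, rfl⟩ := hφ x
  have hw : q • w ∈ LinearMap.ker φ := by rwa [LinearMap.mem_ker, map_smul]
  choose c hc using fun i => (mul_dvd_mul_iff_left hq).mp (hker _ hw i)
  exact ⟨φ c, by rw [← map_smul]; congr; ext i; exact hc i⟩

theorem ValuationRing.dvd_of_isCompl_of_forall_smul_eq_zero [IsDomain R] [ValuationRing R]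
    {ι : Type*} {φ : (ι → R) →ₗ[R] M} (hφ : Function.Surjective φ) {e : R}
    (hker : ∀ a ∈ LinearMap.ker φ, ∀ i, e ∣ a i) {N N' : Submodule R M} (h : IsCompl N N')
    (hN : N.FG) (hN0 : N ≠ ⊥) {q : R} (hq : q ≠ 0) (hqN : ∀ x ∈ N, q • x = 0) : e ∣ q := by
  by_contra heq
  obtain ⟨s, rfl⟩ := (ValuationRing.dvd_total e q).resolve_left heq
  have hs : s ∈ maximalIdeal R := fun hunit => heq (hunit.mul_right_dvd.mpr dvd_rfl)
  refine hN0 (eq_bot_of_isCompl_of_le_smul_top h hN (maximalIdeal_le_jacobson _) fun x hx => ?_)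
  obtain ⟨y, rfl⟩ := exists_eq_smul_of_smul_eq_zero hφ hq hker (hqN x hx)
  exact smul_mem_smul hs mem_top

namespace VirtuallyRegular

theorem fg_torsionOf [Module.FinitePresentation R M] (hvr : VirtuallyRegular R M) (t : M) :
    (Ideal.torsionOf R M t).FG := by
  obtain ⟨N, ⟨N', h⟩, ⟨g⟩⟩ := hvr t
  have := finitePresentation_of_isCompl h
  have := Module.FinitePresentation.of_equiv
    ((Ideal.quotTorsionOfEquivSpanSingleton R M t).trans g).symm
  have hker := Module.FinitePresentation.fg_ker _ (mkQ_surjective (Ideal.torsionOf R M t))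
  rwa [ker_mkQ] at hker

theorem dvd_of_smul_eq_zero [IsDomain R] [ValuationRing R] (hvr : VirtuallyRegular R M)
    {ι : Type*} {φ : (ι → R) →ₗ[R] M} (hφ : Function.Surjective φ) {e : R}
    (hker : ∀ a ∈ LinearMap.ker φ, ∀ i, e ∣ a i) {t : M} (ht : t ≠ 0) {q : R} (hq : q ≠ 0)
    (hqt : q • t = 0) : e ∣ q := by
  obtain ⟨N, ⟨N', h⟩, ⟨g⟩⟩ := hvr t
  have hspan : ∀ y ∈ span R {t}, q • y = 0 := by
    intro y hy
    obtain ⟨r, rfl⟩ := mem_span_singleton.mp hy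
    rw [smul_comm, hqt, smul_zero]
  refine ValuationRing.dvd_of_isCompl_of_forall_smul_eq_zero hφ hker h ?_ ?_ hq fun x hx => ?_
  · exact Module.Finite.iff_fg.mp (Module.Finite.equiv g)
  · refine (Submodule.ne_bot_iff N).mpr ⟨g ⟨t, mem_span_singleton_self t⟩, coe_mem _, ?_⟩
    rw [ne_eq, ZeroMemClass.coe_eq_zero, LinearEquiv.map_eq_zero_iff]
    exact fun h => ht (congr_arg Subtype.val h)
  · obtain ⟨y, hy⟩ := g.surjective ⟨x, hx⟩
    have h0 : q • g y = 0 := by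
      rw [← map_smul, show q • y = 0 from Subtype.ext (hspan y y.2), map_zero]
    rw [hy] at h0
    exact congr_arg Subtype.val h0

end VirtuallyRegular

theorem ValuationRing.maximalIdeal_le_span_singleton_of_forall_dvd [IsDomain R] [ValuationRing R]
    {e : R} (hdvd : ∀ x : M, x ≠ 0 → ∀ q ≠ (0 : R), q • x = 0 → e ∣ q) {t : M} (ht : t ≠ 0)
    (hfg : (Ideal.torsionOf R M t).FG) {r : R} (hr : r ≠ 0) (hrt : r • t = 0) :
    maximalIdeal R ≤ Ideal.span {e} := by
  obtain ⟨a, ha⟩ := (IsBezout.isPrincipal_of_FG _ hfg).principal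
  have hann : ∀ c : R, c • t = 0 ↔ a ∣ c := fun c => by
    rw [← Ideal.mem_torsionOf_iff, ha, Ideal.submodule_span_eq, Ideal.mem_span_singleton]
  have ha0 : a ≠ 0 := by
    rintro rfl
    exact hr (zero_dvd_iff.mp ((hann r).mp hrt))
  intro q hq
  rw [Ideal.mem_span_singleton]
  rcases ValuationRing.dvd_total a q with ⟨c, rfl⟩ | ⟨c, rfl⟩
  · exact (hdvd t ht a ha0 ((hann a).mpr dvd_rfl)).mul_right c
  · refine hdvd (c • t) ?_ q (left_ne_zero_of_mul ha0) (by rw [smul_smul, (hann _).mpr dvd_rfl])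
    intro hct
    obtain ⟨d, hd⟩ := (hann c).mp hct
    refine (mem_maximalIdeal _).mp hq (.of_mul_eq_one d ?_)
    exact mul_left_cancel₀ (right_ne_zero_of_mul ha0) (by linear_combination -hd)

end

/-- If the maximal ideal of a valuation domain `R` is not principal, then every finitely
presented virtually regular `R`-module is free. -/
theorem fp_virtuallyRegular_free_of_maximalIdeal_not_principal
    (R : Type*) [CommRing R] [IsDomain R] [ValuationRing R]
    (hP : ¬ (IsLocalRing.maximalIdeal R).IsPrincipal)
    (M : Type*) [AddCommGroup M] [Module R M]
    (hfp : Module.FinitePresentation R M) (hvr : VirtuallyRegular R M) :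
    Module.Free R M := by
  obtain ⟨n, φ, hφ, e, heP, hker⟩ :=
    ValuationRing.exists_surjective_forall_ker_dvd (R := R) (M := M)
  have htors : torsion R M = ⊥ := by
    refine eq_bot_iff.mpr fun t ht => (mem_bot R).mpr ?_
    by_contra ht0
    obtain ⟨⟨r, hr⟩, hrt⟩ := (mem_torsion_iff t).mp ht
    refine hP ⟨e, le_antisymm ?_ ((Ideal.span_singleton_le_iff_mem _).mpr heP)⟩
    exact ValuationRing.maximalIdeal_le_span_singleton_of_forall_dvd
      (fun _ hx _ hq => hvr.dvd_of_smul_eq_zero hφ hker hx hq) ht0 (hvr.fg_torsionOf t)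
      (nonZeroDivisors.ne_zero hr) hrt
  have := Module.Flat.flat_iff_torsion_eq_bot_of_isBezout.mpr htors
  exact Module.free_of_flat_of_isLocalRing
end

section
/- Let R be a discrete valuation ring with maximal ideal Rp. Then a finitely presented R-module M is completely virtually regular if and only if M ≅ R^n ⊕ (R/Rp)^m for some nonnegative integers n and m. -/
/-!
Over a local ring a cyclic module is indecomposable, so if `R ∙ y` is virtually regular, the
summand isomorphic to `R ∙ p • y` is `0` or all of `R ∙ y`. When `p ^ 2 • y = 0`, `p` kills
`R ∙ p • y`, hence `p • y = 0`. Over a DVR this says that `p` kills the torsion of a completely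
virtually regular module. Conversely, a finitely generated module whose torsion is killed by `p`
is `R^n ⊕ (R/p)^m`, and so is each of its submodules; in `R^n ⊕ (R/p)^m` every cyclic submodule
is `0`, `≅ R` or `≅ R/p`, and the latter two are retracts.
-/

open Submodule

theorem exists_isDirectSummand_linearEquiv_of_leftInverse {R M B : Type*} [Ring R]
    [AddCommGroup M] [Module R M] [AddCommGroup B] [Module R B] {s : B →ₗ[R] M}
    {f : M →ₗ[R] B} (h : Function.LeftInverse f s) :
    ∃ N : Submodule R M, N.IsDirectSummand ∧ Nonempty (B ≃ₗ[R] N) :=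
  ⟨LinearMap.range s, ⟨_, LinearMap.isCompl_of_proj (f := s.rangeRestrict ∘ₗ f) <| by
    rintro ⟨_, b, rfl⟩
    ext
    simp [h b]⟩, ⟨LinearEquiv.ofLeftInverse h⟩⟩

theorem VirtuallyRegular.of_linearEquiv {R M M₂ : Type*} [Ring R] [AddCommGroup M]
    [Module R M] [AddCommGroup M₂] [Module R M₂] (e : M ≃ₗ[R] M₂)
    (h : VirtuallyRegular R M₂) : VirtuallyRegular R M := by
  intro x
  obtain ⟨N, ⟨N', hc⟩, ⟨f⟩⟩ := h (e x)
  have hspan : (R ∙ x).map (e : M →ₗ[R] M₂) = R ∙ e x := by simp [Submodule.map_span]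
  exact ⟨N.map (e.symm : M₂ →ₗ[R] M),
    ⟨N'.map (e.symm : M₂ →ₗ[R] M), (Submodule.orderIsoMapComap e.symm).isCompl hc⟩,
    ⟨(e.submoduleMap _).trans
      ((LinearEquiv.ofEq _ _ hspan).trans (f.trans (e.symm.submoduleMap N)))⟩⟩

theorem Submodule.eq_bot_or_eq_top_of_isCompl {R M : Type*} [Ring R] [IsLocalRing R]
    [AddCommGroup M] [Module R M] {y : M} (hy : R ∙ y = ⊤) {N N' : Submodule R M}
    (h : IsCompl N N') : N = ⊥ ∨ N = ⊤ := by
  have hgen : ∀ P : Submodule R M, y ∈ P → P = ⊤ := fun P hP =>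
    top_le_iff.mp (hy ▸ (span_singleton_le_iff_mem y P).mpr hP)
  obtain ⟨a, ha, b, hb, hab⟩ := mem_sup.mp (h.sup_eq_top ▸ mem_top : y ∈ N ⊔ N')
  obtain ⟨r, rfl⟩ := (span_singleton_eq_top_iff R y).mp hy a
  obtain ⟨s, rfl⟩ := (span_singleton_eq_top_iff R y).mp hy b
  by_cases hr : IsUnit r
  · exact .inr (hgen N (by simpa [smul_smul] using N.smul_mem (hr.unit⁻¹ : Rˣ) ha))
  by_cases hs : IsUnit s
  · exact .inl (eq_bot_of_isCompl_top
      (hgen N' (by simpa [smul_smul] using N'.smul_mem (hs.unit⁻¹ : Rˣ) hb) ▸ h))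
  -- otherwise `1 - (r + s)` is a unit killing `y`, so `M = 0`
  have hunit : IsUnit (1 - (r + s)) := by
    by_contra hu
    exact IsLocalRing.nonunits_add hu (IsLocalRing.nonunits_add hr hs) (by simp)
  have hy0 : y = 0 := hunit.smul_eq_zero.mp (by simp [sub_smul, add_smul, hab])
  exact .inl (eq_bot_iff.mpr fun z _ => by
    obtain ⟨t, rfl⟩ := (span_singleton_eq_top_iff R y).mp hy z
    simp [hy0])

theorem Submodule.span_singleton_mk_self_eq_top {R M : Type*} [Ring R] [AddCommGroup M]
    [Module R M] (y : M) : R ∙ (⟨y, mem_span_singleton_self y⟩ : R ∙ y) = ⊤ :=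
  (span_singleton_eq_top_iff R _).mpr fun v => by
    obtain ⟨r, hr⟩ := mem_span_singleton.mp v.2
    exact ⟨r, Subtype.ext hr⟩

theorem VirtuallyRegular.smul_eq_zero_of_sq_smul_eq_zero {R M : Type*} [CommRing R]
    [IsLocalRing R] [AddCommGroup M] [Module R M] {y : M} (h : VirtuallyRegular R (R ∙ y))
    {p : R} (hy : p ^ 2 • y = 0) : p • y = 0 := by
  set ŷ : R ∙ y := ⟨y, mem_span_singleton_self y⟩
  suffices p • ŷ = 0 from congrArg Subtype.val this
  obtain ⟨N, ⟨N', hc⟩, ⟨f⟩⟩ := h (p • ŷ)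
  have hspan : ∀ w : R ∙ (p • ŷ), p • w = 0 := by
    rintro ⟨_, hw⟩
    obtain ⟨r, rfl⟩ := mem_span_singleton.mp hw
    apply Subtype.ext
    change p • r • p • ŷ = 0
    rw [smul_comm p r, smul_smul p p, ← sq, show p ^ 2 • ŷ = 0 from Subtype.ext hy, smul_zero]
  have hN : ∀ z : N, p • z = 0 := fun z => by
    rw [← f.apply_symm_apply z, ← map_smul, hspan, map_zero]
  rcases eq_bot_or_eq_top_of_isCompl (span_singleton_mk_self_eq_top y) hc with hbot | htop
  · have h0 : f ⟨p • ŷ, mem_span_singleton_self _⟩ = 0 :=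
      Subtype.ext ((mem_bot R).mp (hbot ▸ (f _).2))
    exact congrArg Subtype.val (f.map_eq_zero_iff.mp h0)
  · exact congrArg Subtype.val (hN ⟨ŷ, htop ▸ mem_top⟩)

theorem smul_eq_zero_of_pow_succ_smul_eq_zero {R M : Type*} [Monoid R] [Zero M] [MulAction R M]
    {p : R} (H : ∀ y : M, p ^ 2 • y = 0 → p • y = 0) {x : M} :
    ∀ k : ℕ, p ^ (k + 1) • x = 0 → p • x = 0
  | 0, hx => by simpa using hx
  | k + 1, hx => smul_eq_zero_of_pow_succ_smul_eq_zero H k <| by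
      rw [pow_succ', mul_smul]
      exact H _ (by rwa [← mul_smul, ← pow_add, add_comm])

theorem torsion_le_torsionBy_of_forall_sq_smul_eq_zero {R M : Type*} [CommRing R] [IsDomain R]
    [IsDiscreteValuationRing R] [AddCommGroup M] [Module R M] {p : R} (hp : Irreducible p)
    (H : ∀ y : M, p ^ 2 • y = 0 → p • y = 0) : torsion R M ≤ torsionBy R M p := by
  intro x hx
  obtain ⟨⟨a, ha⟩, hax⟩ := (mem_torsion_iff x).mp hx
  obtain ⟨k, u, rfl⟩ :=
    IsDiscreteValuationRing.eq_unit_mul_pow_irreducible (nonZeroDivisors.ne_zero ha) hp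
  have hpk : p ^ k • x = 0 := by simpa [mul_smul] using hax
  rw [mem_torsionBy_iff]
  cases k with
  | zero => simp [show x = 0 by simpa using hpk]
  | succ k => exact smul_eq_zero_of_pow_succ_smul_eq_zero H k hpk

theorem CompletelyVirtuallyRegular.torsion_le_torsionBy {R M : Type*} [CommRing R] [IsDomain R]
    [IsDiscreteValuationRing R] [AddCommGroup M] [Module R M] (h : CompletelyVirtuallyRegular R M)
    {p : R} (hp : Irreducible p) : torsion R M ≤ torsionBy R M p :=
  torsion_le_torsionBy_of_forall_sq_smul_eq_zero hp fun y =>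
    (h (R ∙ y)).smul_eq_zero_of_sq_smul_eq_zero

theorem Module.IsTorsionBySet.exists_linearEquiv_fin_quotient {R T : Type*} [CommRing R]
    [AddCommGroup T] [Module R T] [Module.Finite R T] {I : Ideal R} [I.IsMaximal]
    (h : Module.IsTorsionBySet R T I) : ∃ m : ℕ, Nonempty (T ≃ₗ[R] (Fin m → R ⧸ I)) := by
  let _ : Field (R ⧸ I) := Ideal.Quotient.field I
  let _ : Module (R ⧸ I) T := h.module
  have : IsScalarTower R (R ⧸ I) T := h.isScalarTower
  have : Module.Finite (R ⧸ I) T := Module.Finite.of_restrictScalars_finite R (R ⧸ I) T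
  exact ⟨_, ⟨(Module.finBasis (R ⧸ I) T).equivFun.restrictScalars R⟩⟩

/-- The quotient by the torsion submodule is free, so the torsion submodule splits off. -/
theorem exists_linearEquiv_prod_of_torsion_le_torsionBy {R M : Type*} [CommRing R] [IsDomain R]
    [IsPrincipalIdealRing R] [AddCommGroup M] [Module R M] [Module.Finite R M] {p : R}
    (hp : (Ideal.span {p}).IsMaximal) (h : torsion R M ≤ torsionBy R M p) :
    ∃ n m : ℕ, Nonempty (M ≃ₗ[R] (Fin n → R) × (Fin m → R ⧸ Ideal.span {p})) := by
  set T := torsion R M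
  obtain ⟨s, hs⟩ := Module.projective_lifting_property T.mkQ LinearMap.id T.mkQ_surjective
  let e : M ≃ₗ[R] T × (M ⧸ T) :=
    ((LinearMap.exact_subtype_mkQ T).splitSurjectiveEquiv T.injective_subtype ⟨s, hs⟩).1
  have hT : Module.IsTorsionBySet R T (Ideal.span {p} : Set R) :=
    (Module.isTorsionBySet_span_singleton_iff p).mpr fun x => Subtype.ext (h x.2)
  obtain ⟨m, ⟨eT⟩⟩ := hT.exists_linearEquiv_fin_quotient
  exact ⟨_, m, ⟨e.trans ((LinearEquiv.prodComm R _ _).trans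
    ((Module.finBasis R (M ⧸ T)).equivFun.prodCongr eT))⟩⟩

theorem Ideal.Quotient.smul_eq_zero_of_mem {R : Type*} [CommRing R] {I : Ideal R} {a : R}
    (ha : a ∈ I) (c : R ⧸ I) : a • c = 0 := by
  obtain ⟨b, rfl⟩ := Ideal.Quotient.mk_surjective c
  exact Ideal.Quotient.eq_zero_iff_mem.mpr (I.mul_mem_right b ha)

theorem smul_eq_zero_of_mem_of_fst_eq_zero {R ι κ : Type*} [CommRing R] {I : Ideal R} {a : R}
    (ha : a ∈ I) {x : (ι → R) × (κ → R ⧸ I)} (hx : x.1 = 0) : a • x = 0 :=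
  Prod.ext (by simp [hx]) (funext fun i => Ideal.Quotient.smul_eq_zero_of_mem ha (x.2 i))

theorem virtuallyRegular_pi_prod_pi_quotient {R : Type*} [CommRing R] [IsDomain R] {I : Ideal R}
    (hI : I.IsMaximal) (n m : ℕ) : VirtuallyRegular R ((Fin n → R) × (Fin m → R ⧸ I)) := by
  intro x
  by_cases hu : x.1 = 0
  · by_cases hv : x.2 = 0
    · obtain rfl : x = 0 := Prod.ext hu hv
      exact ⟨⊥, ⟨⊤, isCompl_bot_top⟩, ⟨LinearEquiv.ofEq _ _ (span_zero_singleton R)⟩⟩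
    obtain ⟨j, -⟩ := Function.ne_iff.mp hv
    have hx : Ideal.torsionOf R _ x = I :=
      (hI.eq_of_le ((Ideal.torsionOf_eq_top_iff R x).not.mpr (hv ∘ congrArg Prod.snd))
        fun a ha => smul_eq_zero_of_mem_of_fst_eq_zero ha hu).symm
    obtain ⟨N, hN, ⟨e⟩⟩ := exists_isDirectSummand_linearEquiv_of_leftInverse
      (s := LinearMap.inr R (Fin n → R) _ ∘ₗ LinearMap.single R (fun _ => R ⧸ I) j)
      (f := LinearMap.proj j ∘ₗ LinearMap.snd R (Fin n → R) (Fin m → R ⧸ I)) fun c => by simp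
    exact ⟨N, hN, ⟨(Ideal.quotTorsionOfEquivSpanSingleton R _ x).symm.trans
      ((Submodule.quotEquivOfEq _ _ hx).trans e)⟩⟩
  · obtain ⟨i, -⟩ := Function.ne_iff.mp hu
    have hx : Ideal.torsionOf R _ x = ⊥ := eq_bot_iff.mpr fun a ha =>
      (smul_eq_zero.mp (congrArg Prod.fst ((Ideal.mem_torsionOf_iff x a).mp ha))).resolve_right hu
    obtain ⟨N, hN, ⟨e⟩⟩ := exists_isDirectSummand_linearEquiv_of_leftInverse
      (s := LinearMap.inl R _ (Fin m → R ⧸ I) ∘ₗ LinearMap.single R (fun _ => R) i)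
      (f := LinearMap.proj i ∘ₗ LinearMap.fst R (Fin n → R) (Fin m → R ⧸ I)) fun c => by simp
    exact ⟨N, hN, ⟨(Ideal.quotTorsionOfEquivSpanSingleton R _ x).symm.trans
      ((Submodule.quotEquivOfEqBot _ hx).trans e)⟩⟩

theorem torsion_pi_prod_pi_quotient_le_torsionBy {R ι κ : Type*} [CommRing R] [IsDomain R]
    (p : R) : torsion R ((ι → R) × (κ → R ⧸ Ideal.span {p})) ≤
      torsionBy R ((ι → R) × (κ → R ⧸ Ideal.span {p})) p := by
  intro x hx
  obtain ⟨⟨a, ha⟩, hax⟩ := (mem_torsion_iff x).mp hx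
  have hx1 : x.1 = 0 :=
    (smul_eq_zero.mp (congrArg Prod.fst hax)).resolve_left (nonZeroDivisors.ne_zero ha)
  exact smul_eq_zero_of_mem_of_fst_eq_zero (Ideal.mem_span_singleton_self p) hx1

theorem torsion_le_torsionBy_of_injective {R M M₂ : Type*} [CommRing R] [AddCommGroup M]
    [Module R M] [AddCommGroup M₂] [Module R M₂] {f : M →ₗ[R] M₂} (hf : Function.Injective f)
    {p : R} (h : torsion R M₂ ≤ torsionBy R M₂ p) : torsion R M ≤ torsionBy R M p := by
  intro x hx
  obtain ⟨⟨a, ha⟩, hax⟩ := (mem_torsion_iff x).mp hx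
  have hfx : f x ∈ torsion R M₂ := (mem_torsion_iff _).mpr
    ⟨⟨a, ha⟩, show a • f x = 0 by rw [← map_smul, show a • x = 0 from hax, map_zero]⟩
  rw [mem_torsionBy_iff]
  exact hf (by rw [map_smul, map_zero]; exact (mem_torsionBy_iff _ _).mp (h hfx))

theorem completelyVirtuallyRegular_of_torsion_le_torsionBy {R M : Type*} [CommRing R]
    [IsDomain R] [IsPrincipalIdealRing R] [AddCommGroup M] [Module R M] [Module.Finite R M]
    {p : R} (hp : (Ideal.span {p}).IsMaximal) (h : torsion R M ≤ torsionBy R M p) :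
    CompletelyVirtuallyRegular R M := fun A => by
  obtain ⟨n, m, ⟨e⟩⟩ := exists_linearEquiv_prod_of_torsion_le_torsionBy hp
    (torsion_le_torsionBy_of_injective A.injective_subtype h)
  exact (virtuallyRegular_pi_prod_pi_quotient hp n m).of_linearEquiv e

/-- Let `R` be a discrete valuation ring with maximal ideal `Rp`. A finitely presented
`R`-module `M` is completely virtually regular iff `M ≅ R^n ⊕ (R/Rp)^m`. -/
theorem fp_completelyVirtuallyRegular_iff_of_dvr
    (R : Type*) [CommRing R] [IsDomain R] [IsDiscreteValuationRing R]
    (p : R) (hp : IsLocalRing.maximalIdeal R = Ideal.span {p})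
    (M : Type*) [AddCommGroup M] [Module R M] (hfp : Module.FinitePresentation R M) :
    CompletelyVirtuallyRegular R M ↔
      ∃ n m : ℕ,
        Nonempty (M ≃ₗ[R] ((Fin n → R) × (Fin m → R ⧸ Ideal.span {p}))) := by
  have hirr : Irreducible p := (IsDiscreteValuationRing.irreducible_iff_uniformizer p).mpr hp
  have hmax : (Ideal.span {p}).IsMaximal := hp ▸ IsLocalRing.maximalIdeal.isMaximal R
  constructor
  · intro h
    exact exists_linearEquiv_prod_of_torsion_le_torsionBy hmax (h.torsion_le_torsionBy hirr)
  · rintro ⟨n, m, ⟨e⟩⟩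
    exact completelyVirtuallyRegular_of_torsion_le_torsionBy hmax
      (torsion_le_torsionBy_of_injective e.injective (torsion_pi_prod_pi_quotient_le_torsionBy p))
end

section
/- Let p be a prime integer and M a nonzero finite abelian p-group. Then M is virtually regular as a ℤ-module if and only if M ≅ (ℤ/pℤ)^{a_1} ⊕ (ℤ/p^2ℤ)^{a_2} ⊕ ⋯ ⊕ (ℤ/p^kℤ)^{a_k} for some positive integer k and positive integers a_1, a_2, …, a_k (i.e., every exponent between 1 and k occurs with positive multiplicity). -/
theorem exists_isDirectSummand_linearEquiv_iff {R M A : Type*} [Ring R] [AddCommGroup M]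
    [Module R M] [AddCommGroup A] [Module R A] :
    (∃ N : Submodule R M, N.IsDirectSummand ∧ Nonempty (A ≃ₗ[R] N)) ↔
      ∃ (f : A →ₗ[R] M) (r : M →ₗ[R] A), r ∘ₗ f = LinearMap.id := by
  constructor
  · rintro ⟨N, ⟨N', hN⟩, ⟨e⟩⟩
    refine ⟨N.subtype ∘ₗ e.toLinearMap, e.symm.toLinearMap ∘ₗ N.projectionOnto N' hN, ?_⟩
    ext a
    simp [Submodule.projectionOnto_apply_left]
  · rintro ⟨f, r, hrf⟩
    have hf : Function.Injective f := Function.LeftInverse.injective (LinearMap.congr_fun hrf)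
    refine ⟨LinearMap.range f, ⟨_, LinearMap.isCompl_of_proj (f := f.rangeRestrict ∘ₗ r) ?_⟩,
      ⟨LinearEquiv.ofInjective f hf⟩⟩
    rintro ⟨_, a, rfl⟩
    ext
    simpa using congrArg f (LinearMap.congr_fun hrf a)

noncomputable def spanSingletonLinearEquivZModAddOrderOf {A : Type*} [AddCommGroup A] (x : A) :
    (ℤ ∙ x) ≃ₗ[ℤ] ZMod (addOrderOf x) :=
  CharacterModule.intSpanEquivQuotAddOrderOf x ≪≫ₗ
    (Int.quotientSpanNatEquivZMod (addOrderOf x)).toAddEquiv.toIntLinearEquiv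

theorem virtuallyRegular_int_iff_s18 {M : Type*} [AddCommGroup M] :
    VirtuallyRegular ℤ M ↔ ∀ x : M, ∃ (f : ZMod (addOrderOf x) →ₗ[ℤ] M)
      (r : M →ₗ[ℤ] ZMod (addOrderOf x)), r ∘ₗ f = LinearMap.id := by
  have hspan (x : M) (N : Submodule ℤ M) :
      Nonempty ((ℤ ∙ x) ≃ₗ[ℤ] N) ↔ Nonempty (ZMod (addOrderOf x) ≃ₗ[ℤ] N) :=
    ⟨fun ⟨e⟩ ↦ ⟨(spanSingletonLinearEquivZModAddOrderOf x).symm ≪≫ₗ e⟩,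
      fun ⟨e⟩ ↦ ⟨spanSingletonLinearEquivZModAddOrderOf x ≪≫ₗ e⟩⟩
  simp only [VirtuallyRegular, hspan, exists_isDirectSummand_linearEquiv_iff]

/-- The `h`-th Ulm invariant of `M` at `p` is nonzero. -/
def HasTorsionOfExactHeight (p h : ℕ) (M : Type*) [AddCommGroup M] : Prop :=
  ∃ u : M, p • u = 0 ∧ (∃ y : M, u = p ^ h • y) ∧ ∀ w : M, u ≠ p ^ (h + 1) • w

namespace HasTorsionOfExactHeight

variable {p h : ℕ}

theorem of_leftInverse {A B : Type*} [AddCommGroup A] [AddCommGroup B] (f : A →+ B) (r : B →+ A)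
    (hrf : Function.LeftInverse r f) (hA : HasTorsionOfExactHeight p h A) :
    HasTorsionOfExactHeight p h B := by
  obtain ⟨u, hpu, ⟨y, rfl⟩, hu⟩ := hA
  refine ⟨f (p ^ h • y), by rw [← map_nsmul, hpu, map_zero], ⟨f y, map_nsmul f _ _⟩,
    fun w hw ↦ hu (r w) ?_⟩
  rw [← map_nsmul, ← hw, hrf]

theorem of_addEquiv {A B : Type*} [AddCommGroup A] [AddCommGroup B] (e : A ≃+ B)
    (hA : HasTorsionOfExactHeight p h A) : HasTorsionOfExactHeight p h B :=
  hA.of_leftInverse e.toAddMonoidHom e.symm.toAddMonoidHom e.symm_apply_apply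

theorem zmod (hp : 1 < p) (h : ℕ) : HasTorsionOfExactHeight p h (ZMod (p ^ (h + 1))) := by
  refine ⟨p ^ h • 1, ?_, ⟨1, rfl⟩, fun w hw ↦ ?_⟩
  · rw [← mul_nsmul', ← pow_succ', nsmul_eq_mul, ZMod.natCast_self, zero_mul]
  · rw [nsmul_eq_mul, nsmul_eq_mul, ZMod.natCast_self, zero_mul, mul_one,
      ZMod.natCast_eq_zero_iff, Nat.pow_dvd_pow_iff_le_right hp] at hw
    omega

theorem exists_of_pi {ι : Type*} {A : ι → Type*} [∀ t, AddCommGroup (A t)]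
    (hA : HasTorsionOfExactHeight p h (Π t, A t)) : ∃ t, HasTorsionOfExactHeight p h (A t) := by
  by_contra! hnone
  obtain ⟨u, hpu, ⟨y, rfl⟩, hu⟩ := hA
  have hdiv (t : ι) : ∃ w, p ^ h • y t = p ^ (h + 1) • w := by
    have := hnone t
    simp only [HasTorsionOfExactHeight, not_exists, not_and, not_forall, not_not] at this
    exact this _ (congrFun hpu t) ⟨y t, rfl⟩
  choose w hw using hdiv
  exact hu w (funext hw)

theorem eq_succ_of_zmod_pow (hp : 0 < p) {n : ℕ}
    (hP : HasTorsionOfExactHeight p h (ZMod (p ^ n))) : n = h + 1 := by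
  have : NeZero (p ^ n) := ⟨(pow_pos hp n).ne'⟩
  obtain ⟨_, hpu, ⟨y, rfl⟩, hu⟩ := hP
  rw [← mul_nsmul', ← pow_succ'] at hpu
  rcases lt_trichotomy n (h + 1) with hn | hn | hn
  · refine absurd ?_ (hu 0)
    rw [smul_zero, nsmul_eq_mul, (ZMod.natCast_eq_zero_iff _ _).mpr (pow_dvd_pow p (by omega)),
      zero_mul]
  · exact hn
  · obtain ⟨d, rfl⟩ := Nat.exists_eq_add_of_lt hn
    have hdvd : p ^ (h + 1) * p ^ (d + 1) ∣ p ^ (h + 1) * y.val := by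
      rw [← pow_add, ← add_assoc, ← ZMod.natCast_eq_zero_iff, Nat.cast_mul,
        ZMod.natCast_zmod_val y, ← nsmul_eq_mul]
      exact hpu
    obtain ⟨c, hc⟩ := Nat.dvd_of_mul_dvd_mul_left (pow_pos hp _) hdvd
    refine absurd ?_ (hu (p ^ d * c : ℕ))
    rw [← ZMod.natCast_zmod_val y, hc, nsmul_eq_mul, nsmul_eq_mul]
    push_cast
    ring

end HasTorsionOfExactHeight

theorem exists_linearEquiv_pi_zmod_pow {p : ℕ} (hp : p.Prime) (M : Type*) [AddCommGroup M]
    [Finite M] (hpg : ∀ x : M, ∃ n : ℕ, (p ^ n : ℤ) • x = 0) :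
    ∃ (ι : Type) (_ : Fintype ι) (m : ι → ℕ),
      (∀ t, 0 < m t) ∧ Nonempty (M ≃ₗ[ℤ] Π t, ZMod (p ^ m t)) := by
  classical
  obtain ⟨ι, _, n, hn, ⟨e⟩⟩ := AddCommGroup.equiv_directSum_zmod_of_finite' M
  let e₁ : M ≃ₗ[ℤ] Π t, ZMod (n t) :=
    e.toIntLinearEquiv ≪≫ₗ DirectSum.linearEquivFunOnFintype ℤ ι _
  have hpow (t : ι) : ∃ m, n t = p ^ m := by
    obtain ⟨s, hs⟩ := hpg (e₁.symm (Pi.single t 1))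
    have hdvd : ((p ^ s : ℕ) : ZMod (n t)) = 0 := by
      simpa using congrFun (congrArg e₁ hs) t
    obtain ⟨m, -, hm⟩ := (Nat.dvd_prime_pow hp).mp ((ZMod.natCast_eq_zero_iff _ _).mp hdvd)
    exact ⟨m, hm⟩
  choose m hm using hpow
  refine ⟨ι, inferInstance, m, fun t ↦ Nat.pos_of_ne_zero fun h0 ↦ ?_,
    ⟨e₁ ≪≫ₗ LinearEquiv.piCongrRight fun t ↦
      (ZMod.ringEquivCongr (hm t)).toAddEquiv.toIntLinearEquiv⟩⟩
  simpa [hm t, h0] using hn t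

theorem virtuallyRegular_of_linearEquiv_pi_zmod {p k : ℕ} (hp : p.Prime) {a : Fin k → ℕ}
    (ha : ∀ i, 0 < a i) {M : Type*} [AddCommGroup M]
    (e : M ≃ₗ[ℤ] Π i : Fin k, Fin (a i) → ZMod (p ^ ((i : ℕ) + 1))) : VirtuallyRegular ℤ M := by
  classical
  rw [virtuallyRegular_int_iff_s18]
  intro x
  have hkx : p ^ k • x = 0 := by
    refine e.injective (funext fun i ↦ funext fun s ↦ ?_)
    rw [map_nsmul, map_zero, Pi.smul_apply, Pi.smul_apply, nsmul_eq_mul,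
      (ZMod.natCast_eq_zero_iff _ _).mpr (pow_dvd_pow p (by omega)), zero_mul]
    rfl
  obtain ⟨j, hjk, hj⟩ := (Nat.dvd_prime_pow hp).mp (addOrderOf_dvd_of_nsmul_eq_zero hkx)
  rw [hj]
  rcases j with _ | j
  · rw [pow_zero]
    exact ⟨0, 0, LinearMap.ext fun _ ↦ Subsingleton.elim _ _⟩
  · let i : Fin k := ⟨j, by omega⟩
    let s : Fin (a i) := ⟨0, ha i⟩
    refine ⟨e.symm.toLinearMap ∘ₗ LinearMap.single ℤ _ i ∘ₗ
      LinearMap.single ℤ (fun _ ↦ ZMod (p ^ (j + 1))) s,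
      LinearMap.proj s ∘ₗ LinearMap.proj i ∘ₗ e.toLinearMap, ?_⟩
    ext
    simp

theorem exists_exponent_eq_of_virtuallyRegular {p : ℕ} (hp : p.Prime) {ι : Type*} {m : ι → ℕ}
    {M : Type*} [AddCommGroup M] (e : M ≃ₗ[ℤ] Π t, ZMod (p ^ m t))
    (hreg : VirtuallyRegular ℤ M)
    {t₀ : ι} {j : ℕ} (hj : 0 < j) (hjm : j ≤ m t₀) : ∃ t, m t = j := by
  classical
  set x := e.symm (Pi.single t₀ ((p ^ (m t₀ - j) : ℕ) : ZMod (p ^ m t₀)))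
  have hx : addOrderOf x = p ^ j :=
    calc addOrderOf x = addOrderOf ((p ^ (m t₀ - j) : ℕ) : ZMod (p ^ m t₀)) :=
          (e.symm.toAddEquiv.addOrderOf_eq _).trans <|
            addOrderOf_injective (AddMonoidHom.single (fun t ↦ ZMod (p ^ m t)) t₀)
              (fun _ _ h ↦ Pi.single_injective t₀ h) _
      _ = p ^ j := by
          rw [ZMod.addOrderOf_coe _ (pow_pos hp.pos _).ne',
            Nat.gcd_eq_right (pow_dvd_pow p (Nat.sub_le _ _)),
            Nat.pow_div (Nat.sub_le _ _) hp.pos, Nat.sub_sub_self hjm]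
  have hretract := virtuallyRegular_int_iff_s18.mp hreg x
  obtain ⟨h, rfl⟩ : ∃ h, j = h + 1 := ⟨j - 1, by omega⟩
  rw [hx] at hretract
  obtain ⟨f, r, hrf⟩ := hretract
  obtain ⟨t, ht⟩ := ((HasTorsionOfExactHeight.zmod hp.one_lt h).of_leftInverse f.toAddMonoidHom
    r.toAddMonoidHom (LinearMap.congr_fun hrf) |>.of_addEquiv e.toAddEquiv).exists_of_pi
  exact ⟨t, ht.eq_succ_of_zmod_pow hp.pos⟩

noncomputable def piLinearEquivPiFinFiber (R : Type*) [Semiring R] {ι κ : Type*} [Finite ι]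
    {A : ι → Type*} {B : κ → Type*} [∀ t, AddCommMonoid (A t)] [∀ t, Module R (A t)]
    [∀ i, AddCommMonoid (B i)] [∀ i, Module R (B i)] (f : ι → κ)
    (e : ∀ i (t : {t // f t = i}), A t ≃ₗ[R] B i) :
    (Π t, A t) ≃ₗ[R] Π i, Fin (Nat.card {t // f t = i}) → B i :=
  (LinearEquiv.piCongrLeft R A (Equiv.sigmaFiberEquiv f)).symm ≪≫ₗ
    LinearEquiv.piCurry R (fun i (t : {t // f t = i}) ↦ A t) ≪≫ₗ
    LinearEquiv.piCongrRight fun i ↦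
      LinearEquiv.piCongrRight (e i) ≪≫ₗ
        LinearEquiv.piCongrLeft' R (fun _ ↦ B i) (Finite.equivFin _)

theorem exists_linearEquiv_fin_pi_zmod_of_exponents (p : ℕ) {ι : Type*} [Fintype ι]
    [Nonempty ι] (m : ι → ℕ) (hm : ∀ t, 0 < m t)
    (hdown : ∀ t₀ j, 0 < j → j ≤ m t₀ → ∃ t, m t = j) :
    ∃ k : ℕ, 0 < k ∧ ∃ a : Fin k → ℕ, (∀ i, 0 < a i) ∧
      Nonempty ((Π t, ZMod (p ^ m t)) ≃ₗ[ℤ]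
        Π i : Fin k, Fin (a i) → ZMod (p ^ ((i : ℕ) + 1))) := by
  obtain ⟨t₀, -, ht₀⟩ := Finset.exists_mem_eq_sup Finset.univ Finset.univ_nonempty m
  have hle (t : ι) : m t ≤ m t₀ := ht₀ ▸ Finset.le_sup (Finset.mem_univ t)
  let f : ι → Fin (m t₀) := fun t ↦ ⟨m t - 1, by have := hle t; have := hm t; omega⟩
  have hfiber (i : Fin (m t₀)) (t : {t // f t = i}) : m t = (i : ℕ) + 1 := by
    have hval := congrArg Fin.val t.2
    simp only [f] at hval
    have := hm t
    omega
  refine ⟨m t₀, hm t₀, fun i ↦ Nat.card {t // f t = i}, fun i ↦ ?_,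
    ⟨piLinearEquivPiFinFiber ℤ f fun i t ↦
      (ZMod.ringEquivCongr (congrArg (p ^ ·) (hfiber i t))).toAddEquiv.toIntLinearEquiv⟩⟩
  obtain ⟨t, ht⟩ := hdown t₀ ((i : ℕ) + 1) (by omega) i.isLt
  have : Nonempty {t // f t = i} := ⟨t, Fin.ext (by simp only [f, ht]; omega)⟩
  exact Nat.card_pos

/-- A nonzero finite abelian `p`-group `M` is virtually regular as a `ℤ`-module iff
`M ≅ (ℤ/p)^{a_1} ⊕ (ℤ/p²)^{a_2} ⊕ ⋯ ⊕ (ℤ/pᵏ)^{a_k}` where `k` and all the `a_i`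
are positive. -/
theorem finite_pGroup_virtuallyRegular_iff
    (p : ℕ) (hp : p.Prime) (M : Type*) [AddCommGroup M] [Finite M] [Nontrivial M]
    (hpg : ∀ x : M, ∃ n : ℕ, (p ^ n : ℤ) • x = 0) :
    VirtuallyRegular ℤ M ↔
      ∃ k : ℕ, 0 < k ∧ ∃ a : Fin k → ℕ, (∀ i, 0 < a i) ∧
        Nonempty (M ≃ₗ[ℤ] ((i : Fin k) → Fin (a i) → ZMod (p ^ ((i : ℕ) + 1)))) := by
  constructor
  · intro hreg
    obtain ⟨ι, _, m, hm, ⟨e⟩⟩ := exists_linearEquiv_pi_zmod_pow hp M hpg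
    have : Nonempty ι := by
      by_contra hι
      rw [not_nonempty_iff] at hι
      exact not_subsingleton M e.toEquiv.subsingleton
    obtain ⟨k, hk, a, ha, ⟨e'⟩⟩ := exists_linearEquiv_fin_pi_zmod_of_exponents p m hm
      fun _ _ hj hjm ↦ exists_exponent_eq_of_virtuallyRegular hp e hreg hj hjm
    exact ⟨k, hk, a, ha, ⟨e ≪≫ₗ e'⟩⟩
  · rintro ⟨k, -, a, ha, ⟨e⟩⟩
    exact virtuallyRegular_of_linearEquiv_pi_zmod hp ha e
end
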